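/- Fix 0 < β < 1 and define h_β ∈ L²(ℝ) by h_β(x) = (1/2 − |x|)^{β/2} for |x| ≤ 1/2 and h_β(x) = 0 for |x| > 1/2. Then h_β ∈ W^{s,2}(ℝ) for every s < (1+β)/2; equivalently, ∫_ℝ |ξ|^{2s} |ĥ_β(ξ)|² dξ < ∞ for all s < (1+β)/2. -/

import Mathlib

/-! With `c = β / 2`, `h_β` is the real function `(1/2 - |x|)₊ ^ c`, which is `c`-Hölder and
concave on its support `[-1/2, 1/2]`. For `δ = 1 / (2|ξ|)` the second difference
`Δ_δ² h(x) = h(x + 2δ) - 2 h(x + δ) + h(x)` has Fourier transform `(e(δξ) - 1)² ĥ(ξ) = 4 ĥ(ξ)`,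
while concavity fixes the sign of `Δ_δ² h` away from the ends of the support, so that
`∫ |Δ_δ² h|` telescopes and is `O(δ^{1+c})`. Hence `|ĥ(ξ)| ≲ (1 + |ξ|)^{-(1+c)}`, and
`|ξ|^{2s} |ĥ(ξ)|²` is integrable as soon as `2s - 2 - β < -1`. -/

open MeasureTheory Complex Filter
open scoped ENNReal Topology

noncomputable section

/-- The function `h_β(x) = (1/2 - |x|)^{β/2}` for `|x| ≤ 1/2`, and `0` otherwise. -/
def hbeta (β : ℝ) : ℝ → ℂ :=
  fun x => if |x| ≤ 1/2 then (((1/2 - |x| : ℝ) ^ (β/2) : ℝ) : ℂ) else 0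

open Set FourierTransform
open scoped fwdDiff

theorem Real.abs_rpow_sub_rpow_le {u v c : ℝ} (hu : 0 ≤ u) (hv : 0 ≤ v) (hc₀ : 0 ≤ c)
    (hc₁ : c ≤ 1) : |u ^ c - v ^ c| ≤ |u - v| ^ c := by
  wlog hvu : v ≤ u generalizing u v
  · rw [abs_sub_comm, abs_sub_comm u]
    exact this hv hu (le_of_not_ge hvu)
  have hsub := Real.rpow_add_le_add_rpow hv (sub_nonneg.2 hvu) hc₀ hc₁
  rw [add_sub_cancel] at hsub
  rw [abs_of_nonneg (sub_nonneg.2 hvu), abs_of_nonneg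
    (sub_nonneg.2 (Real.rpow_le_rpow hv hvu hc₀))]
  linarith

theorem ConcaveOn.fwdDiff_fwdDiff_nonpos {s : Set ℝ} {f : ℝ → ℝ} (hf : ConcaveOn ℝ s f)
    {x δ : ℝ} (hx : x ∈ s) (hx' : x + 2 * δ ∈ s) : Δ_[δ] (Δ_[δ] f) x ≤ 0 := by
  have hmid := hf.2 hx hx' (by norm_num : (0 : ℝ) ≤ 1 / 2) (by norm_num : (0 : ℝ) ≤ 1 / 2)
    (by norm_num)
  rw [smul_eq_mul, smul_eq_mul, smul_eq_mul, smul_eq_mul,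
    show 1 / 2 * x + 1 / 2 * (x + 2 * δ) = x + δ by ring] at hmid
  simp only [fwdDiff, add_assoc, ← two_mul]
  linarith

theorem integral_abs_fwdDiff_fwdDiff_le_of_concaveOn {f : ℝ → ℝ} {a b δ ε : ℝ}
    (hf : Continuous f) (hconc : ConcaveOn ℝ (Icc a b) f) (hsupp : Function.support f ⊆ Icc a b)
    (hδ : 0 < δ) (hδab : 2 * δ ≤ b - a) (hΔf : ∀ x, |Δ_[δ] f x| ≤ ε) :
    ∫ x, |Δ_[δ] (Δ_[δ] f) x| ≤ 10 * δ * ε := by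
  set ψ := Δ_[δ] f
  have hψ : Continuous ψ := (hf.comp (continuous_add_const δ)).sub hf
  have hψshift : Continuous fun x ↦ ψ (x + δ) := hψ.comp (continuous_add_const δ)
  have hD : Continuous fun x ↦ |Δ_[δ] ψ x| := (hψshift.sub hψ).abs
  have hint (u v : ℝ) : IntervalIntegrable (fun x ↦ |Δ_[δ] ψ x|) volume u v :=
    hD.intervalIntegrable u v
  have hf0 := Function.support_subset_iff'.1 hsupp
  have hzero : ∀ x ∉ Icc (a - 2 * δ) b, |Δ_[δ] ψ x| = 0 := by
    intro x hx
    rw [mem_Icc, not_and_or, not_le, not_le] at hx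
    obtain ⟨h₀, h₁, h₂⟩ : f x = 0 ∧ f (x + δ) = 0 ∧ f (x + δ + δ) = 0 := by
      refine ⟨hf0 _ ?_, hf0 _ ?_, hf0 _ ?_⟩ <;> rintro ⟨h, h'⟩ <;> rcases hx with hx | hx <;>
        linarith
    simp [ψ, fwdDiff, h₀, h₁, h₂]
  have hstrip (u : ℝ) : ∫ x in u..u + 2 * δ, |Δ_[δ] ψ x| ≤ 4 * δ * ε := by
    refine (Real.le_norm_self _).trans
      ((intervalIntegral.norm_integral_le_of_norm_le_const (C := 2 * ε) fun x _ ↦ ?_).trans_eq ?_)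
    · rw [Real.norm_eq_abs, abs_abs]
      exact (abs_sub _ _).trans (by linarith [hΔf (x + δ), hΔf x])
    · rw [add_sub_cancel_left, abs_of_pos (by positivity)]
      ring
  have hψint (u v : ℝ) : IntervalIntegrable ψ volume u v := hψ.intervalIntegrable u v
  have hψavg (u : ℝ) : |∫ x in u..u + δ, ψ x| ≤ δ * ε := by
    refine (intervalIntegral.norm_integral_le_of_norm_le_const (f := ψ) fun x _ ↦ hΔf x).trans_eq
      ?_
    rw [add_sub_cancel_left, abs_of_pos hδ, mul_comm]
  -- On `[a, b - 2δ]` concavity gives `Δ²f ≤ 0`, so the integral telescopes.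
  have hmid : ∫ x in a..b - 2 * δ, |Δ_[δ] ψ x| ≤ 2 * δ * ε := by
    calc ∫ x in a..b - 2 * δ, |Δ_[δ] ψ x| = ∫ x in a..b - 2 * δ, (ψ x - ψ (x + δ)) := by
          refine intervalIntegral.integral_congr fun x hx ↦ ?_
          rw [uIcc_of_le (by linarith)] at hx
          rw [abs_of_nonpos (hconc.fwdDiff_fwdDiff_nonpos ⟨hx.1, by linarith [hx.2]⟩
            ⟨by linarith [hx.1], by linarith [hx.2]⟩)]
          simp only [ψ, fwdDiff]
          ring
      _ = (∫ x in a..a + δ, ψ x) - ∫ x in b - 2 * δ..b - 2 * δ + δ, ψ x := by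
          rw [intervalIntegral.integral_sub (hψint _ _) (hψshift.intervalIntegrable _ _),
            intervalIntegral.integral_comp_add_right ψ δ,
            ← intervalIntegral.integral_add_adjacent_intervals (hψint a (a + δ)) (hψint _ _),
            ← intervalIntegral.integral_add_adjacent_intervals (hψint (a + δ) (b - 2 * δ))
              (hψint _ (b - 2 * δ + δ))]
          ring
      _ ≤ 2 * δ * ε := by linarith [abs_le.1 (hψavg a), abs_le.1 (hψavg (b - 2 * δ))]
  calc ∫ x, |Δ_[δ] ψ x| = ∫ x in a - 2 * δ..b, |Δ_[δ] ψ x| := by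
        rw [intervalIntegral.integral_of_le (by linarith), ← integral_Icc_eq_integral_Ioc,
          setIntegral_eq_integral_of_forall_compl_eq_zero hzero]
    _ = (∫ x in a - 2 * δ..a, |Δ_[δ] ψ x|) + (∫ x in a..b - 2 * δ, |Δ_[δ] ψ x|)
          + ∫ x in b - 2 * δ..b, |Δ_[δ] ψ x| := by
        rw [intervalIntegral.integral_add_adjacent_intervals (hint _ _) (hint _ _),
          intervalIntegral.integral_add_adjacent_intervals (hint _ _) (hint _ _)]
    _ ≤ 4 * δ * ε + 2 * δ * ε + 4 * δ * ε := by
        gcongr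
        · simpa using hstrip (a - 2 * δ)
        · simpa using hstrip (b - 2 * δ)
    _ = 10 * δ * ε := by ring

section Fourier

variable {E : Type*} [NormedAddCommGroup E] [NormedSpace ℂ E]

theorem Real.fourier_comp_add_right (f : ℝ → E) (δ ξ : ℝ) :
    𝓕 (fun x ↦ f (x + δ)) ξ = 𝐞 (δ * ξ) • 𝓕 f ξ := by
  have h := congrFun (VectorFourier.fourierIntegral_comp_add_right 𝐞 volume (innerₗ ℝ) f δ) ξ
  simp only [innerₗ_apply_apply, Real.inner_apply] at h
  exact h

theorem Real.fourier_fwdDiff {f : ℝ → E} (hf : Integrable f) (δ ξ : ℝ) :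
    𝓕 (Δ_[δ] f) ξ = ((𝐞 (δ * ξ) : ℂ) - 1) • 𝓕 f ξ := by
  have hf' : Integrable (fun x ↦ f (x + δ)) := hf.comp_add_right δ
  rw [sub_smul, one_smul, ← Circle.smul_def, ← Real.fourier_comp_add_right, Real.fourier_eq,
    Real.fourier_eq, Real.fourier_eq, ← integral_sub]
  · simp only [fwdDiff, smul_sub]
  · exact (Real.fourierIntegral_convergent_iff ξ).2 hf'
  · exact (Real.fourierIntegral_convergent_iff ξ).2 hf

theorem Real.fourierChar_eq_neg_one_of_abs_eq_half {t : ℝ} (ht : |t| = 1 / 2) :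
    (𝐞 t : ℂ) = -1 := by
  rcases (abs_eq (by norm_num)).1 ht with rfl | rfl
  · rw [Real.fourierChar_apply, show 2 * Real.pi * (1 / 2 : ℝ) = Real.pi by ring,
      Complex.exp_pi_mul_I]
  · rw [Real.fourierChar_apply, show 2 * Real.pi * (-(1 / 2) : ℝ) = -Real.pi by ring,
      ofReal_neg, neg_mul, Complex.exp_neg_pi_mul_I]

theorem Real.four_mul_norm_fourier_le_integral_norm_fwdDiff_fwdDiff {f : ℝ → E}
    (hf : Integrable f) {δ ξ : ℝ} (hδξ : |δ * ξ| = 1 / 2) :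
    4 * ‖𝓕 f ξ‖ ≤ ∫ x, ‖Δ_[δ] (Δ_[δ] f) x‖ := by
  have hΔf : Integrable (Δ_[δ] f) := (hf.comp_add_right δ).sub hf
  calc 4 * ‖𝓕 f ξ‖ = ‖𝓕 (Δ_[δ] (Δ_[δ] f)) ξ‖ := by
        rw [Real.fourier_fwdDiff hΔf, Real.fourier_fwdDiff hf, smul_smul, norm_smul,
          Real.fourierChar_eq_neg_one_of_abs_eq_half hδξ]
        norm_num
    _ ≤ ∫ x, ‖Δ_[δ] (Δ_[δ] f) x‖ :=
        VectorFourier.norm_fourierIntegral_le_integral_norm _ _ _ _ _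

end Fourier

theorem lintegral_abs_rpow_mul_nnnorm_sq_ne_top {E : Type*} [NormedAddCommGroup E] {g : ℝ → E}
    {B a s : ℝ} (hg : ∀ ξ, ‖g ξ‖ ≤ B * (1 + |ξ|) ^ (-a)) (hs : 0 ≤ s) (hsa : 2 * s + 1 < 2 * a) :
    (∫⁻ ξ : ℝ, ENNReal.ofReal (|ξ| ^ (2 * s)) * (‖g ξ‖₊ : ℝ≥0∞) ^ 2) ≠ ⊤ := by
  have hfin := finite_integral_one_add_norm (E := ℝ) (μ := volume) (r := 2 * a - 2 * s)
    (by simp; linarith)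
  refine ne_top_of_le_ne_top (ENNReal.mul_ne_top (ENNReal.ofReal_ne_top (r := B ^ 2)) hfin.ne) ?_
  rw [← lintegral_const_mul' _ _ ENNReal.ofReal_ne_top]
  refine lintegral_mono fun ξ ↦ ?_
  have hX : 0 < 1 + |ξ| := by positivity
  have hgξ : ‖g ξ‖ ^ 2 ≤ B ^ 2 * (1 + |ξ|) ^ (-(2 * a)) := by
    calc ‖g ξ‖ ^ 2 ≤ (B * (1 + |ξ|) ^ (-a)) ^ 2 := pow_le_pow_left₀ (norm_nonneg _) (hg ξ) 2
      _ = B ^ 2 * (1 + |ξ|) ^ (-(2 * a)) := by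
        rw [mul_pow, ← Real.rpow_mul_natCast hX.le]
        ring_nf
  have hξ : |ξ| ^ (2 * s) ≤ (1 + |ξ|) ^ (2 * s) :=
    Real.rpow_le_rpow (abs_nonneg ξ) (by linarith) (by linarith)
  rw [← enorm_eq_nnnorm, ← ofReal_norm, ← ENNReal.ofReal_pow (norm_nonneg _),
    ← ENNReal.ofReal_mul (by positivity), ← ENNReal.ofReal_mul (by positivity)]
  refine ENNReal.ofReal_le_ofReal ?_
  calc |ξ| ^ (2 * s) * ‖g ξ‖ ^ 2 ≤ (1 + |ξ|) ^ (2 * s) * (B ^ 2 * (1 + |ξ|) ^ (-(2 * a))) :=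
        mul_le_mul hξ hgξ (by positivity) (by positivity)
    _ = B ^ 2 * (1 + ‖ξ‖) ^ (-(2 * a - 2 * s)) := by
        rw [Real.norm_eq_abs, mul_left_comm, ← Real.rpow_add hX]
        ring_nf

def tentPow (c x : ℝ) : ℝ := max (1 / 2 - |x|) 0 ^ c

section TentPow

variable {c : ℝ}

theorem hbeta_eq_tentPow {β : ℝ} (hβ : 0 < β) : hbeta β = fun x ↦ (tentPow (β / 2) x : ℂ) := by
  funext x
  by_cases hx : |x| ≤ 1 / 2
  · rw [hbeta, if_pos hx, tentPow, max_eq_left (by linarith)]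
  · rw [hbeta, if_neg hx, tentPow, max_eq_right (by linarith), Real.zero_rpow (by positivity),
      ofReal_zero]

theorem tentPow_eq_of_mem_Icc {x : ℝ} (hx : x ∈ Icc (-(1 / 2)) (1 / 2)) :
    tentPow c x = (1 / 2 - |x|) ^ c := by
  rw [tentPow, max_eq_left (sub_nonneg.2 (abs_le.2 hx))]

theorem continuous_tentPow (hc : 0 ≤ c) : Continuous (tentPow c) :=
  (Real.continuous_rpow_const hc).comp
    ((continuous_const.sub continuous_abs).max continuous_const)

theorem support_tentPow_subset (hc : 0 < c) :
    Function.support (tentPow c) ⊆ Icc (-(1 / 2)) (1 / 2) := by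
  refine Function.support_subset_iff'.2 fun x hx ↦ ?_
  rw [tentPow, max_eq_right, Real.zero_rpow hc.ne']
  rw [mem_Icc, ← abs_le] at hx
  linarith

theorem hasCompactSupport_tentPow (hc : 0 < c) : HasCompactSupport (tentPow c) :=
  .intro isCompact_Icc (Function.support_subset_iff'.1 (support_tentPow_subset hc))

theorem tentPow_nonneg (x : ℝ) : 0 ≤ tentPow c x := Real.rpow_nonneg (le_max_right _ _) c

theorem tentPow_le_one (hc : 0 ≤ c) (x : ℝ) : tentPow c x ≤ 1 :=
  Real.rpow_le_one (le_max_right _ _) (max_le (by linarith [abs_nonneg x]) zero_le_one) hc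

theorem concaveOn_tentPow (hc₀ : 0 ≤ c) (hc₁ : c ≤ 1) :
    ConcaveOn ℝ (Icc (-(1 / 2)) (1 / 2)) (tentPow c) := by
  refine ⟨convex_Icc _ _, fun x hx y hy a b ha hb hab ↦ ?_⟩
  have hx' := sub_nonneg.2 (abs_le.2 hx)
  have hy' := sub_nonneg.2 (abs_le.2 hy)
  rw [tentPow_eq_of_mem_Icc hx, tentPow_eq_of_mem_Icc hy,
    tentPow_eq_of_mem_Icc (convex_Icc _ _ hx hy ha hb hab)]
  calc a • (1 / 2 - |x|) ^ c + b • (1 / 2 - |y|) ^ c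
      ≤ (a • (1 / 2 - |x|) + b • (1 / 2 - |y|)) ^ c :=
        (Real.concaveOn_rpow hc₀ hc₁).2 hx' hy' ha hb hab
    _ ≤ (1 / 2 - |a • x + b • y|) ^ c := by
        refine Real.rpow_le_rpow (by positivity) ?_ hc₀
        have htri := abs_add_le (a * x) (b * y)
        rw [abs_mul, abs_mul, abs_of_nonneg ha, abs_of_nonneg hb] at htri
        simp only [smul_eq_mul]
        nlinarith

theorem abs_tentPow_sub_le (hc₀ : 0 ≤ c) (hc₁ : c ≤ 1) (x y : ℝ) :
    |tentPow c x - tentPow c y| ≤ |x - y| ^ c := by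
  refine (Real.abs_rpow_sub_rpow_le (le_max_right _ _) (le_max_right _ _) hc₀ hc₁).trans
    (Real.rpow_le_rpow (abs_nonneg _) ((abs_max_sub_max_le_abs _ _ _).trans ?_) hc₀)
  rw [sub_sub_sub_cancel_left, abs_sub_comm x y]
  exact abs_abs_sub_abs_le_abs_sub y x

theorem integral_abs_fwdDiff_fwdDiff_tentPow_le (hc₀ : 0 < c) (hc₁ : c ≤ 1) {δ : ℝ}
    (hδ : 0 < δ) (hδ₁ : 2 * δ ≤ 1) :
    ∫ x, |Δ_[δ] (Δ_[δ] (tentPow c)) x| ≤ 10 * δ ^ (1 + c) := by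
  have hΔ (x : ℝ) : |Δ_[δ] (tentPow c) x| ≤ δ ^ c := by
    simpa [fwdDiff, abs_of_pos hδ] using abs_tentPow_sub_le hc₀.le hc₁ (x + δ) x
  have hbound := integral_abs_fwdDiff_fwdDiff_le_of_concaveOn (continuous_tentPow hc₀.le)
    (concaveOn_tentPow hc₀.le hc₁) (support_tentPow_subset hc₀) hδ (by linarith) hΔ
  rwa [Real.rpow_add hδ, Real.rpow_one, ← mul_assoc]

theorem integral_tentPow_le_one (hc : 0 < c) : ∫ x, tentPow c x ≤ 1 := by
  rw [← setIntegral_eq_integral_of_forall_compl_eq_zero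
    (Function.support_subset_iff'.1 (support_tentPow_subset hc))]
  refine (Real.le_norm_self _).trans ((norm_setIntegral_le_of_norm_le_const (C := 1) (by simp)
    fun x _ ↦ ?_).trans_eq ?_)
  · rw [Real.norm_of_nonneg (tentPow_nonneg x)]
    exact tentPow_le_one hc.le x
  · norm_num

theorem norm_fourier_tentPow_le (hc₀ : 0 < c) (hc₁ : c ≤ 1) (ξ : ℝ) :
    ‖𝓕 (fun x ↦ (tentPow c x : ℂ)) ξ‖ ≤ 4 * (1 + |ξ|) ^ (-(1 + c)) := by
  have hX : 0 < 1 + |ξ| := by positivity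
  rcases le_or_gt |ξ| 1 with hξ | hξ
  · calc ‖𝓕 (fun x ↦ (tentPow c x : ℂ)) ξ‖ ≤ ∫ x, ‖(tentPow c x : ℂ)‖ :=
          VectorFourier.norm_fourierIntegral_le_integral_norm _ _ _ _ _
      _ = ∫ x, tentPow c x := by simp [abs_of_nonneg (tentPow_nonneg _)]
      _ ≤ 1 := integral_tentPow_le_one hc₀
      _ ≤ 4 * (1 + |ξ|) ^ (-(1 + c)) := by
        rw [Real.rpow_neg hX.le, ← div_eq_mul_inv, one_le_div (by positivity)]
        calc (1 + |ξ|) ^ (1 + c) ≤ 2 ^ (2 : ℝ) := by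
              refine (Real.rpow_le_rpow hX.le (by linarith : 1 + |ξ| ≤ 2) (by linarith)).trans ?_
              exact Real.rpow_le_rpow_of_exponent_le one_le_two (by linarith)
          _ = 4 := by norm_num
  · set δ := (2 * |ξ|)⁻¹
    have hδ : 0 < δ := by positivity
    have hδξ : |δ * ξ| = 1 / 2 := by
      rw [abs_mul, abs_of_pos hδ]
      simp only [δ]
      field_simp
    have hΔ (x : ℝ) : ‖Δ_[δ] (Δ_[δ] fun x ↦ (tentPow c x : ℂ)) x‖
        = |Δ_[δ] (Δ_[δ] (tentPow c)) x| := by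
      simp only [fwdDiff]
      rw [← ofReal_sub, ← ofReal_sub, ← ofReal_sub, norm_real, Real.norm_eq_abs]
    have hδpow : δ ^ (1 + c) ≤ (1 + |ξ|) ^ (-(1 + c)) := by
      rw [Real.inv_rpow (by positivity), ← Real.rpow_neg (by positivity)]
      exact Real.rpow_le_rpow_of_nonpos hX (by linarith) (by linarith)
    have hfourier := Real.four_mul_norm_fourier_le_integral_norm_fwdDiff_fwdDiff
      (f := fun x ↦ (tentPow c x : ℂ))
      ((continuous_ofReal.comp (continuous_tentPow hc₀.le)).integrable_of_hasCompactSupport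
        ((hasCompactSupport_tentPow hc₀).comp_left ofReal_zero)) hδξ
    simp only [hΔ] at hfourier
    have h2δ : 2 * δ ≤ 1 := by
      simp only [δ]
      rw [mul_inv, ← mul_assoc, mul_inv_cancel₀ two_ne_zero, one_mul]
      exact inv_le_one_of_one_le₀ hξ.le
    have hsecond := integral_abs_fwdDiff_fwdDiff_tentPow_le hc₀ hc₁ hδ h2δ
    have hX' : 0 ≤ (1 + |ξ|) ^ (-(1 + c)) := by positivity
    linarith

end TentPow

/-- **Proposition.**  Fix `0 < β < 1`.  Then `h_β ∈ W^{s,2}(ℝ) = H^s(ℝ)` for every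
`0 ≤ s < (1+β)/2`; equivalently `h_β ∈ L²(ℝ)` and `∫ |ξ|^{2s} |ĥ_β(ξ)|² dξ < ∞` for all such
`s`, where `ĥ_β` is the Fourier transform of `h_β`. -/
theorem hbeta_sobolev (β : ℝ) (hβ0 : 0 < β) (hβ1 : β < 1) :
    MemLp (hbeta β) 2 (volume : Measure ℝ) ∧
    ∀ s : ℝ, 0 ≤ s → s < (1 + β) / 2 →
      (∫⁻ ξ : ℝ, ENNReal.ofReal (|ξ| ^ (2 * s)) *
          (‖FourierTransform.fourier (hbeta β) ξ‖₊ : ℝ≥0∞) ^ 2) ≠ ⊤ := by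
  have hc₀ : 0 < β / 2 := by positivity
  have hc₁ : β / 2 ≤ 1 := by linarith
  rw [hbeta_eq_tentPow hβ0]
  refine ⟨(continuous_ofReal.comp (continuous_tentPow hc₀.le)).memLp_of_hasCompactSupport
    ((hasCompactSupport_tentPow hc₀).comp_left ofReal_zero), fun s hs hsβ ↦ ?_⟩
  exact lintegral_abs_rpow_mul_nnnorm_sq_ne_top (norm_fourier_tentPow_le hc₀ hc₁) hs (by linarith)
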